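/- Let $p \ge 5$ be a prime. Let $\Delta$ be a cyclic group of order $p$, let $\Lambda = \mathbb{Z}_p[\Delta]$ be the group algebra, let $\iota$ be the ring automorphism of $\Lambda$ induced by $g \mapsto g^{-1}$ on $\Delta$, and let $\Lambda^+$ be the subring of $\Lambda$ fixed by $\iota$. Then $\Lambda^+$ has exactly two minimal prime ideals $\mathfrak{p}_1, \mathfrak{p}_2$; the quotient $\Lambda^+/\mathfrak{p}_1$ is isomorphic as a ring to $\mathbb{Z}_p$, and the quotient $\Lambda^+/\mathfrak{p}_2$ is isomorphic as a ring to $\mathbb{Z}_p[\zeta_p + \zeta_p^{-1}]$, the $\mathbb{Z}_p$-subalgebra generated by $\zeta_p + \zeta_p^{-1}$ inside an algebraic closure of $\mathbb{Q}_p$, where $\zeta_p$ is a primitive $p$-th root of unity. -/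

import Mathlib

/-!
Let `g` generate `Δ`, let `ε : Λ → ℤ_p` be the augmentation and `χ : Λ → ℚ̄_p` the character
with `χ g = ζ`. Every element of `Λ` is `P(g)` with `deg P < p`, and it lies in `ker ε ∩ ker χ`
iff `P` vanishes at `1` and at `ζ`. Since `Φ_p(X + 1)` is Eisenstein, `Φ_p` is the minimal
polynomial of `ζ` over `ℤ_p`, so this forces `P = 0`. Hence `𝔭₁ = ker ε` and `𝔭₂ = ker χ`
restricted to `Λ⁺` are primes with `𝔭₁ ∩ 𝔭₂ = 0`; they are incomparable (`g + g⁻¹ - 2` and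
`∑ h` separate them), so they are exactly the minimal primes. As `2` is a unit, `Λ⁺` is generated
by `g + g⁻¹`, because `gⁿ + g⁻ⁿ` is a Dickson polynomial in `g + g⁻¹`; therefore
`χ(Λ⁺) = ℤ_p[ζ + ζ⁻¹]`, while `ε` maps the constants of `Λ⁺` onto `ℤ_p`.
-/

open Polynomial

theorem minimalPrimes_eq_pair_of_inf_eq_bot {R : Type*} [CommRing R] {P Q : Ideal R}
    [P.IsPrime] [Q.IsPrime] (hPQ : ¬P ≤ Q) (hQP : ¬Q ≤ P) (hinf : P ⊓ Q = ⊥) :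
    minimalPrimes R = {P, Q} := by
  have contains : ∀ I : Ideal R, I.IsPrime → P ≤ I ∨ Q ≤ I := fun I hI =>
    hI.inf_le.1 (hinf ▸ bot_le)
  ext I
  change IsMinimalPrime I ↔ _
  rw [IsMinimalPrime.iff_minimal, Set.mem_insert_iff, Set.mem_singleton_iff]
  constructor
  · intro hI
    rcases contains I hI.1 with h | h
    · exact Or.inl (hI.eq_of_le ‹_› h).symm
    · exact Or.inr (hI.eq_of_le ‹_› h).symm
  · rintro (rfl | rfl)
    · exact ⟨‹_›, fun J hJ hJI => (contains J hJ).resolve_right fun h => hQP (h.trans hJI)⟩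
    · exact ⟨‹_›, fun J hJ hJI => (contains J hJ).resolve_left fun h => hPQ (h.trans hJI)⟩

theorem exists_monoidHom_apply_eq_of_pow_orderOf_eq_one {G M : Type*} [Group G] [Finite G]
    [Monoid M] {g : G} (hg : ∀ x, x ∈ Subgroup.zpowers g) {μ : M} (hμ : μ ^ orderOf g = 1) :
    ∃ χ : G →* M, χ g = μ := by
  have hu := IsUnit.of_pow_eq_one hμ (isOfFinOrder_of_finite g).orderOf_pos.ne'
  have hdvd : orderOf hu.unit ∣ orderOf g :=
    orderOf_dvd_of_pow_eq_one (Units.ext (by simpa using hμ))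
  exact ⟨(Units.coeHom M).comp (monoidHomOfForallMemZpowers hg hdvd), by simp⟩

theorem PadicInt.isUnit_two {p : ℕ} [hp : Fact p.Prime] (hp2 : p ≠ 2) : IsUnit (2 : ℤ_[p]) := by
  rw [PadicInt.isUnit_iff, ← Nat.cast_ofNat, PadicInt.norm_natCast_eq_one_iff]
  exact (Nat.coprime_primes hp.out Nat.prime_two).2 hp2

theorem Polynomial.natDegree_cyclotomic_prime_comp_X_add_one (R : Type*) [CommRing R] [IsDomain R]
    (p : ℕ) [hp : Fact p.Prime] :
    ((cyclotomic p R).comp (X + 1)).natDegree = p - 1 := by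
  rw [natDegree_comp, natDegree_cyclotomic, Nat.totient_prime hp.out, ← C_1,
    natDegree_X_add_C, mul_one]

theorem Polynomial.irreducible_cyclotomic_of_prime {R : Type*} [CommRing R] [IsDomain R]
    (p : ℕ) [hp : Fact p.Prime] (hpR : Prime (p : R)) : Irreducible (cyclotomic p R) := by
  set f := (cyclotomic p R).comp (X + 1)
  have hmonic : f.Monic := by simpa using (cyclotomic.monic p R).comp_X_add_C 1
  have hEisenstein : f.IsEisensteinAt (Ideal.span {(p : R)}) := by
    refine hmonic.isEisensteinAt_of_mem_of_notMem
      (Ideal.span_singleton_ne_top hpR.not_isUnit) (fun {n} hn => ?_) ?_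
    · rw [natDegree_cyclotomic_prime_comp_X_add_one,
        ← natDegree_cyclotomic_prime_comp_X_add_one ℤ] at hn
      have hℤ := Ideal.mem_span_singleton.1 ((cyclotomic_comp_X_add_one_isEisensteinAt p).mem hn)
      have hmap : ((cyclotomic p ℤ).comp (X + 1)).map (Int.castRingHom R) = f := by
        simp [f, Polynomial.map_comp]
      rw [Ideal.mem_span_singleton, ← hmap, coeff_map]
      simpa using Int.cast_dvd_cast (α := R) _ _ hℤ
    · rw [coeff_zero_eq_eval_zero, eval_comp, eval_add, eval_X, eval_one, zero_add,
        eval_one_cyclotomic_prime, Ideal.span_singleton_pow, Ideal.mem_span_singleton, pow_two]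
      intro h
      exact hpR.not_isUnit (isUnit_of_dvd_one
        ((mul_dvd_mul_iff_left hpR.ne_zero).1 (by rwa [mul_one])))
  have hf : Irreducible f := hEisenstein.irreducible
    ((Ideal.span_singleton_prime hpR.ne_zero).2 hpR) hmonic.isPrimitive
    (by rw [natDegree_cyclotomic_prime_comp_X_add_one]; have := hp.out.two_le; omega)
  have hshift : algEquivAevalXAddC (1 : R) (cyclotomic p R) = f := by
    rw [algEquivAevalXAddC_apply, ← comp_eq_aeval, C_1]
  exact (MulEquiv.irreducible_iff (algEquivAevalXAddC (1 : R))).1 (hshift ▸ hf)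

section IntegrallyClosed

variable {R S : Type*} [CommRing R] [IsDomain R] [IsIntegrallyClosed R] [CommRing S] [IsDomain S]
  [Algebra R S] [Module.IsTorsionFree R S]

theorem IsIntegrallyClosed.minpoly.eq_of_irreducible_of_monic {x : S} {P : R[X]}
    (hirr : Irreducible P) (hP : aeval x P = 0) (hmonic : P.Monic) : P = minpoly R x := by
  have hx : IsIntegral R x := ⟨P, hmonic, hP⟩
  obtain ⟨u, hPu⟩ := minpoly.isIntegrallyClosed_dvd hx hP
  have hu : IsUnit u := (hirr.isUnit_or_isUnit hPu).resolve_left (minpoly.not_isUnit R x)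
  exact eq_of_monic_of_associated hmonic (minpoly.monic hx) (Associated.symm ⟨hu.unit, hPu.symm⟩)

theorem Polynomial.eq_zero_of_isRoot_one_of_aeval_eq_zero {ζ : S} (hζ : ζ ≠ 1) {P : R[X]}
    (hdeg : P.natDegree ≤ (minpoly R ζ).natDegree) (h1 : P.IsRoot 1) (hζP : aeval ζ P = 0) :
    P = 0 := by
  set Q := P /ₘ (X - C 1)
  have hPQ : (X - C 1) * Q = P := mul_divByMonic_eq_iff_isRoot.2 h1
  have hQ : aeval ζ Q = 0 := by
    rw [← hPQ, map_mul] at hζP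
    exact (mul_eq_zero.1 hζP).resolve_left (by simpa [sub_eq_zero] using hζ)
  by_contra hP
  have hQ0 : Q ≠ 0 := by rintro h; rw [h, mul_zero] at hPQ; exact hP hPQ.symm
  have := natDegree_le_natDegree (minpoly.IsIntegrallyClosed.degree_le_of_ne_zero hQ0 hQ)
  rw [← hPQ, natDegree_mul (X_sub_C_ne_zero 1) hQ0, natDegree_X_sub_C] at hdeg
  omega

theorem IsPrimitiveRoot.minpoly_eq_cyclotomic_of_prime {p : ℕ} [hp : Fact p.Prime]
    (hpR : Prime (p : R)) {μ : S} (hμ : IsPrimitiveRoot μ p) : minpoly R μ = cyclotomic p R := by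
  refine (IsIntegrallyClosed.minpoly.eq_of_irreducible_of_monic
    (irreducible_cyclotomic_of_prime p hpR) ?_ (cyclotomic.monic p R)).symm
  rw [aeval_def, eval₂_eq_eval_map, map_cyclotomic]
  exact hμ.isRoot_cyclotomic hp.out.pos

end IntegrallyClosed

namespace MonoidAlgebra

section Cyclic

variable {R G : Type*} [CommRing R] [Group G] [Finite G] {g : G}

theorem exists_natDegree_lt_aeval_eq [Nontrivial R] (hg : ∀ x, x ∈ Subgroup.zpowers g)
    (x : MonoidAlgebra R G) :
    ∃ P : R[X], P.natDegree < orderOf g ∧ aeval (R := R) (of R G g) P = x := by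
  have hrange : x ∈ (aeval (R := R) (of R G g)).range := by
    induction x using MonoidAlgebra.induction_on with
    | of h =>
      obtain ⟨n, rfl⟩ := mem_powers_iff_mem_zpowers.2 (hg h)
      exact ⟨X ^ n, by simp⟩
    | add x y hx hy => exact Subalgebra.add_mem _ hx hy
    | smul r x hx => exact Subalgebra.smul_mem _ hx r
  obtain ⟨Q, rfl⟩ := hrange
  have hpos := (isOfFinOrder_of_finite g).orderOf_pos
  have hmonic : (X ^ orderOf g - C 1 : R[X]).Monic := monic_X_pow_sub_C 1 hpos.ne'
  have hker : aeval (R := R) (of R G g) (X ^ orderOf g - C 1) = 0 := by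
    rw [map_sub, map_pow, aeval_X, aeval_C, ← map_pow, pow_orderOf_eq_one, map_one, map_one,
      sub_self]
  refine ⟨Q %ₘ (X ^ orderOf g - C 1), ?_, ?_⟩
  · have hdeg : (X ^ orderOf g - C 1 : R[X]).natDegree = orderOf g := natDegree_X_pow_sub_C
    refine (natDegree_modByMonic_lt Q hmonic fun h => ?_).trans_eq hdeg
    rw [h, natDegree_one] at hdeg
    omega
  · have := congrArg (aeval (R := R) (of R G g)) (modByMonic_add_div Q (X ^ orderOf g - C 1))
    rwa [map_add, map_mul, hker, zero_mul, add_zero] at this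

variable {A : Type*} [CommRing A] [Algebra R A]

theorem eq_zero_of_lift_one_eq_zero_of_lift_eq_zero [IsDomain R] [IsIntegrallyClosed R]
    [IsDomain A] [Module.IsTorsionFree R A] (hg : ∀ x, x ∈ Subgroup.zpowers g) {χ : G →* A}
    (hχ : χ g ≠ 1) (hdeg : orderOf g ≤ (minpoly R (χ g)).natDegree + 1)
    {x : MonoidAlgebra R G} (h₁ : lift R R G 1 x = 0) (h₂ : lift R A G χ x = 0) : x = 0 := by
  obtain ⟨P, hP, rfl⟩ := exists_natDegree_lt_aeval_eq hg x
  rw [← aeval_algHom_apply, lift_of] at h₁ h₂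
  rw [eq_zero_of_isRoot_one_of_aeval_eq_zero hχ (by omega) (by simpa using h₁) h₂, map_zero]

end Cyclic

section Inversion

variable (R G : Type*) [CommRing R] [CommGroup G]

noncomputable def inversionFixed : Subalgebra R (MonoidAlgebra R G) :=
  AlgHom.equalizer (domCongr R R (MulEquiv.inv G)).toAlgHom (AlgHom.id R (MonoidAlgebra R G))

variable {R G}

theorem mem_inversionFixed {x : MonoidAlgebra R G} :
    x ∈ inversionFixed R G ↔ domCongr R R (MulEquiv.inv G) x = x :=
  AlgHom.mem_equalizer _ _ x

theorem of_add_of_inv_mem_inversionFixed (h : G) :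
    of R G h + of R G h⁻¹ ∈ inversionFixed R G := by
  simp [mem_inversionFixed, add_comm]

theorem of_add_of_inv_mem_adjoin {g : G} (hg : ∀ x, x ∈ Subgroup.zpowers g) (h : G) :
    of R G h + of R G h⁻¹ ∈ Algebra.adjoin R {of R G g + of R G g⁻¹} := by
  have hpow (n : ℕ) : of R G (g ^ n) + of R G (g ^ n)⁻¹ ∈
      Algebra.adjoin R {of R G g + of R G g⁻¹} := by
    have hdickson := dickson_one_one_eval_add_inv (of R G g) (of R G g⁻¹)
      (by rw [← map_mul, mul_inv_cancel, map_one]) n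
    rw [map_pow, ← inv_pow, map_pow, ← hdickson, ← map_one (algebraMap R (MonoidAlgebra R G)),
      ← map_dickson, eval_map_algebraMap]
    exact aeval_mem_adjoin_singleton R _
  obtain ⟨n, rfl⟩ := Subgroup.mem_zpowers_iff.1 (hg h)
  obtain ⟨n, rfl | rfl⟩ := Int.eq_nat_or_neg n
  · simpa using hpow n
  · simpa [add_comm] using hpow n

theorem add_domCongr_inv_mem_adjoin {g : G} (hg : ∀ x, x ∈ Subgroup.zpowers g)
    (x : MonoidAlgebra R G) :
    x + domCongr R R (MulEquiv.inv G) x ∈ Algebra.adjoin R {of R G g + of R G g⁻¹} := by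
  induction x using MonoidAlgebra.induction_on with
  | of h => simpa [of_apply] using of_add_of_inv_mem_adjoin hg h
  | add x y hx hy =>
    rw [map_add, add_add_add_comm]
    exact Subalgebra.add_mem _ hx hy
  | smul r x hx =>
    rw [map_smul, ← smul_add]
    exact Subalgebra.smul_mem _ hx r

theorem inversionFixed_eq_adjoin (h2 : IsUnit (2 : R)) {g : G}
    (hg : ∀ x, x ∈ Subgroup.zpowers g) :
    inversionFixed R G = Algebra.adjoin R {of R G g + of R G g⁻¹} := by
  refine le_antisymm (fun x hx => ?_) ?_
  · have hx2 := add_domCongr_inv_mem_adjoin hg x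
    rw [mem_inversionFixed.1 hx, ← two_smul R x] at hx2
    simpa [smul_smul] using Subalgebra.smul_mem _ hx2 ((h2.unit⁻¹ : Rˣ) : R)
  · rw [Algebra.adjoin_le_iff, Set.singleton_subset_iff]
    exact of_add_of_inv_mem_inversionFixed g

section Restriction

variable {A : Type*} [CommRing A] [Algebra R A]

theorem lift_one_comp_val_surjective (S : Subalgebra R (MonoidAlgebra R G)) :
    Function.Surjective ((lift R R G 1).comp S.val) :=
  fun r => ⟨algebraMap R S r, AlgHom.commutes _ r⟩

theorem range_lift_comp_val_inversionFixed (h2 : IsUnit (2 : R)) {g : G}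
    (hg : ∀ x, x ∈ Subgroup.zpowers g) (χ : G →* A) :
    ((lift R A G χ).comp (inversionFixed R G).val).range = Algebra.adjoin R {χ g + χ g⁻¹} := by
  rw [AlgHom.range_comp, Subalgebra.range_val, inversionFixed_eq_adjoin h2 hg, AlgHom.map_adjoin,
    Set.image_singleton, map_add, lift_of, lift_of]

theorem ker_lift_one_comp_val_not_le [IsDomain A] {g : G} {χ : G →* A} (hχ : χ g ≠ 1) :
    ¬RingHom.ker ((lift R R G 1).comp (inversionFixed R G).val) ≤
      RingHom.ker ((lift R A G χ).comp (inversionFixed R G).val) := by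
  set σ : inversionFixed R G := ⟨of R G g + of R G g⁻¹, of_add_of_inv_mem_inversionFixed g⟩
  intro hle
  have hσ := hle (x := σ - 2) (by
    rw [RingHom.mem_ker, map_sub, map_ofNat]; simp [σ, one_add_one_eq_two])
  have hinv : χ g * χ g⁻¹ = 1 := by rw [← map_mul, mul_inv_cancel, map_one]
  have hsq : (χ g - 1) ^ 2 = χ g * (χ g + χ g⁻¹ - 2) := by linear_combination -hinv
  rw [RingHom.mem_ker, map_sub, map_ofNat] at hσ
  simp only [of_apply, AlgHom.coe_comp, Subalgebra.coe_val, Function.comp_apply, map_add,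
    lift_single, one_smul, σ] at hσ
  rw [hσ, mul_zero, sq_eq_zero_iff, sub_eq_zero] at hsq
  exact hχ hsq

theorem ker_lift_comp_val_not_le [IsDomain A] [Fintype G] (hcard : (Fintype.card G : R) ≠ 0)
    {χ : G →* A} (hχ : χ ≠ 1) :
    ¬RingHom.ker ((lift R A G χ).comp (inversionFixed R G).val) ≤
      RingHom.ker ((lift R R G 1).comp (inversionFixed R G).val) := by
  have hN : ∑ h : G, of R G h ∈ inversionFixed R G := by
    rw [mem_inversionFixed, map_sum]
    exact Fintype.sum_equiv (Equiv.inv G) _ _ fun h => by simp [of_apply]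
  intro hle
  have hNε := hle (x := ⟨_, hN⟩) (by simpa using sum_hom_units_eq_zero χ hχ)
  exact hcard (by simpa using hNε)

theorem minimalPrimes_inversionFixed [IsDomain R] [IsIntegrallyClosed R] [IsDomain A]
    [Module.IsTorsionFree R A] [Fintype G]
    (hcard : (Fintype.card G : R) ≠ 0) {g : G} (hg : ∀ x, x ∈ Subgroup.zpowers g) {χ : G →* A}
    (hχ : χ g ≠ 1) (hdeg : orderOf g ≤ (minpoly R (χ g)).natDegree + 1) :
    minimalPrimes (inversionFixed R G) =
      {RingHom.ker ((lift R R G 1).comp (inversionFixed R G).val),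
        RingHom.ker ((lift R A G χ).comp (inversionFixed R G).val)} := by
  have := RingHom.ker_isPrime ((lift R R G 1).comp (inversionFixed R G).val)
  have := RingHom.ker_isPrime ((lift R A G χ).comp (inversionFixed R G).val)
  refine minimalPrimes_eq_pair_of_inf_eq_bot (ker_lift_one_comp_val_not_le hχ)
    (ker_lift_comp_val_not_le hcard fun h => hχ (by rw [h, MonoidHom.one_apply])) ?_
  refine eq_bot_iff.2 fun x hx => Ideal.mem_bot.2 (Subtype.ext ?_)
  exact eq_zero_of_lift_one_eq_zero_of_lift_eq_zero hg hχ hdeg hx.1 hx.2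

end Restriction

end Inversion

end MonoidAlgebra

/-- Let `p ≥ 5` be prime, `Δ` a cyclic group of order `p`, `Λ = ℤ_p[Δ]`, `ι` the
inversion automorphism and `Λ⁺` its fixed subring.  Then `Λ⁺` has exactly two minimal
primes `𝔭₁, 𝔭₂`, with `Λ⁺/𝔭₁ ≅ ℤ_p` and `Λ⁺/𝔭₂ ≅ ℤ_p[ζ_p + ζ_p⁻¹]`, the `ℤ_p`-subalgebra
of an algebraic closure of `ℚ_p` generated by `ζ_p + ζ_p⁻¹` for a primitive `p`-th root
of unity `ζ_p`. -/
theorem stmt_16 (p : ℕ) [Fact p.Prime] (hp5 : 5 ≤ p)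
    (Δ : Type) [CommGroup Δ] [Fintype Δ] [IsCyclic Δ] (hcard : Fintype.card Δ = p)
    (ζ : AlgebraicClosure ℚ_[p]) (hζ : orderOf ζ = p) :
    ∃ p1 p2 : Ideal (AlgHom.equalizer
        (MonoidAlgebra.domCongr ℤ_[p] ℤ_[p] (MulEquiv.inv Δ)).toAlgHom
        (AlgHom.id ℤ_[p] (MonoidAlgebra ℤ_[p] Δ))),
      p1 ≠ p2
      ∧ minimalPrimes (AlgHom.equalizer
          (MonoidAlgebra.domCongr ℤ_[p] ℤ_[p] (MulEquiv.inv Δ)).toAlgHom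
          (AlgHom.id ℤ_[p] (MonoidAlgebra ℤ_[p] Δ))) = {p1, p2}
      ∧ Nonempty ((_ ⧸ p1) ≃+* ℤ_[p])
      ∧ Nonempty ((_ ⧸ p2) ≃+*
          (Subring.closure
            (Set.range ((algebraMap ℚ_[p] (AlgebraicClosure ℚ_[p])).comp
              (algebraMap ℤ_[p] ℚ_[p])) ∪ {ζ + ζ⁻¹}))) := by
  have hp : p.Prime := Fact.out
  have : Module.IsTorsionFree ℤ_[p] (AlgebraicClosure ℚ_[p]) :=
    Module.isTorsionFree_iff_algebraMap_injective.2
      ((algebraMap ℚ_[p] _).injective.comp (IsFractionRing.injective ℤ_[p] ℚ_[p]))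
  obtain ⟨g, hg⟩ := IsCyclic.exists_generator (α := Δ)
  have hgp : orderOf g = p := by
    rw [orderOf_eq_card_of_forall_mem_zpowers hg, Nat.card_eq_fintype_card, hcard]
  have hprim : IsPrimitiveRoot ζ p := by simpa [hζ] using IsPrimitiveRoot.orderOf ζ
  obtain ⟨χ, hχ⟩ := exists_monoidHom_apply_eq_of_pow_orderOf_eq_one hg
    (by rw [hgp]; exact hprim.pow_eq_one)
  have hχ1 : χ g ≠ 1 := by rw [hχ]; exact hprim.ne_one hp.one_lt
  have hdeg : orderOf g ≤ (minpoly ℤ_[p] (χ g)).natDegree + 1 := by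
    rw [hχ, hprim.minpoly_eq_cyclotomic_of_prime PadicInt.prime_p, natDegree_cyclotomic,
      Nat.totient_prime hp, hgp]
    omega
  have hcard' : (Fintype.card Δ : ℤ_[p]) ≠ 0 := by rw [hcard]; exact_mod_cast hp.ne_zero
  have hrange : ((MonoidAlgebra.lift ℤ_[p] _ Δ χ).comp
      (MonoidAlgebra.inversionFixed ℤ_[p] Δ).val).toRingHom.range =
      Subring.closure (Set.range ((algebraMap ℚ_[p] (AlgebraicClosure ℚ_[p])).comp
        (algebraMap ℤ_[p] ℚ_[p])) ∪ {ζ + ζ⁻¹}) := by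
    rw [← hχ, ← map_inv]
    exact (congrArg Subalgebra.toSubring (MonoidAlgebra.range_lift_comp_val_inversionFixed
      (PadicInt.isUnit_two (by omega)) hg χ)).trans (Algebra.adjoin_eq_ring_closure _)
  exact ⟨_, _, ne_of_not_le (MonoidAlgebra.ker_lift_one_comp_val_not_le hχ1),
    MonoidAlgebra.minimalPrimes_inversionFixed hcard' hg hχ1 hdeg,
    ⟨RingHom.quotientKerEquivOfSurjective (MonoidAlgebra.lift_one_comp_val_surjective _)⟩,
    ⟨(RingHom.quotientKerEquivRange _).trans (RingEquiv.subringCongr hrange)⟩⟩
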